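/- In the slow NIM game NIM(n,k) (n piles, each move reduces exactly k distinct nonempty piles by one stone each, normal play), every position in which all pile sizes are even is a P-position (previous-player win). -/

import Mathlib

/-!
Mirror strategy: whenever the opponent removes a stone from each pile of a set `S`, reply by
removing one more stone from each pile of `S`. From an all-even position the piles of `S` held
at least two stones, so the reply is legal and restores an all-even position; since every move
lowers the total number of stones, the opponent eventually runs out of moves.
-/

/-- A move in NIM(n,k): choose k nonempty piles and remove one stone from each. -/
def NimMove (n k : ℕ) (x y : Fin n → ℕ) : Prop :=
  ∃ S : Finset (Fin n), S.card = k ∧ (∀ i ∈ S, 0 < x i) ∧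
    ∀ i, y i = if i ∈ S then x i - 1 else x i

mutual
/-- P-position: every move leads to an N-position (player to move loses). -/
inductive PPos (n k : ℕ) : (Fin n → ℕ) → Prop
  | mk (x : Fin n → ℕ) : (∀ y, NimMove n k x y → NPos n k y) → PPos n k x
/-- N-position: some move leads to a P-position (player to move wins). -/
inductive NPos (n k : ℕ) : (Fin n → ℕ) → Prop
  | mk (x y : Fin n → ℕ) : NimMove n k x y → PPos n k y → NPos n k x
end

namespace NimMove

variable {n k : ℕ} {x y : Fin n → ℕ}

theorem sum_add_card (h : NimMove n k x y) : ∑ i, y i + k = ∑ i, x i := by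
  obtain ⟨S, rfl, hpos, hy⟩ := h
  have hx : ∀ i, x i = y i + if i ∈ S then 1 else 0 := by
    intro i
    rw [hy i]
    split_ifs with hi
    · have := hpos i hi
      omega
    · rfl
  simp only [hx, Finset.sum_add_distrib, Finset.sum_boole, Finset.filter_mem_eq_inter,
    Finset.univ_inter, Nat.cast_id]

theorem sum_lt (hk : 0 < k) (h : NimMove n k x y) : ∑ i, y i < ∑ i, x i := by
  have := h.sum_add_card
  omega

theorem exists_even_reply (hx : ∀ i, Even (x i)) (h : NimMove n k x y) :
    ∃ z, NimMove n k y z ∧ ∀ i, Even (z i) := by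
  obtain ⟨S, hS, hpos, hy⟩ := h
  have two_le : ∀ i ∈ S, 2 ≤ x i := fun i hi => by
    obtain ⟨m, hm⟩ := hx i
    have := hpos i hi
    omega
  refine ⟨fun i => if i ∈ S then x i - 2 else x i, ⟨S, hS, fun i hi => ?_, fun i => ?_⟩, fun i => ?_⟩
  · have := two_le i hi
    rw [hy i, if_pos hi]
    omega
  · dsimp only
    rw [hy i]
    split_ifs <;> omega
  · dsimp only
    split_ifs
    · exact (hx i).tsub even_two
    · exact hx i

end NimMove

theorem pPos_of_forall_reply {n k : ℕ} (hk : 0 < k) (P : (Fin n → ℕ) → Prop)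
    (hreply : ∀ x, P x → ∀ y, NimMove n k x y → ∃ z, NimMove n k y z ∧ P z)
    (x : Fin n → ℕ) (hx : P x) : PPos n k x := by
  induction hN : ∑ i, x i using Nat.strong_induction_on generalizing x with
  | _ N ih =>
    refine PPos.mk x fun y hy => ?_
    obtain ⟨z, hyz, hz⟩ := hreply x hx y hy
    exact NPos.mk y z hyz (ih _ (hN ▸ (hyz.sum_lt hk).trans (hy.sum_lt hk)) z hz rfl)

theorem stmt0 (n k : ℕ) (hk : 0 < k) (hkn : k ≤ n) (x : Fin n → ℕ)
    (hx : ∀ i, Even (x i)) : PPos n k x :=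
  pPos_of_forall_reply hk (fun x => ∀ i, Even (x i))
    (fun _ hx _ hy => hy.exists_even_reply hx) x hx
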